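/- arXiv:1705.08270 — 7 statements merged into one kernel-verified Lean document; each statement's English description precedes it below -/
import Mathlib

section
/- Say a pair of words (u,v) over {0,1} satisfies condition (⋆) if (u,v) ≠ (ε,ε), (u choose v) is odd, (u choose v0) = 0 and (u choose v1) = 0. If (u,v) satisfies (⋆), then both (u0, v0) and (u1, v1) satisfy (⋆). -/
/-- The binomial coefficient of words: the number of occurrences of the second
word as a scattered subsequence of the first. -/
def wb {A : Type*} [DecidableEq A] : List A → List A → ℕ
  | _, [] => 1
  | [], _ :: _ => 0
  | a :: u, b :: v => wb u (b :: v) + (if a = b then wb u v else 0)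

/-- The condition (⋆). -/
def StarCond (u v : List Bool) : Prop :=
  (u, v) ≠ ([], []) ∧ Odd (wb u v) ∧
    wb u (v ++ [false]) = 0 ∧ wb u (v ++ [true]) = 0

lemma wb_nil_right {A : Type*} [DecidableEq A] (u : List A) : wb u [] = 1 := by
  cases u <;> rfl

lemma wb_append_right {A : Type*} [DecidableEq A] (a b : A) :
    ∀ u v : List A, wb (u ++ [a]) (v ++ [b]) = wb u (v ++ [b]) + (if a = b then wb u v else 0)
  | [], [] => by simp [wb, wb_nil_right]
  | [], c :: v' => by simp [wb]; cases v' <;> simp [wb]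
  | x :: u', [] => by
      have e := wb_append_right a b u' []
      simp only [List.nil_append] at e
      simp only [List.cons_append, List.nil_append, wb, List.append_eq, e, wb_nil_right]
      split_ifs <;> omega
  | x :: u', c :: v' => by
      have e1 := wb_append_right a b u' (c :: v')
      have e2 := wb_append_right a b u' v'
      simp only [List.cons_append] at e1
      simp only [List.cons_append, wb, List.append_eq, e1, e2]
      split_ifs <;> omega

lemma wb_ext_zero {A : Type*} [DecidableEq A] (b : A) :
    ∀ u w : List A, wb u w = 0 → wb u (w ++ [b]) = 0
  | [], [] => by simp [wb_nil_right]
  | [], c :: w' => by simp [wb]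
  | x :: u', [] => by simp [wb_nil_right]
  | x :: u', c :: w' => by
      simp only [wb, List.cons_append, Nat.add_eq_zero]
      intro h
      refine ⟨wb_ext_zero b u' (c :: w') h.1, ?_⟩
      split_ifs at h ⊢ with hx
      · exact wb_ext_zero b u' w' h.2
      · rfl

theorem stmt_7 (u v : List Bool) (h : StarCond u v) :
    StarCond (u ++ [false]) (v ++ [false]) ∧ StarCond (u ++ [true]) (v ++ [true]) := by
  obtain ⟨-, hodd, h0, h1⟩ := h
  constructor <;> refine ⟨by simp, ?_, ?_, ?_⟩
  · rw [wb_append_right]; simpa [h0] using hodd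
  · have e := wb_ext_zero false u _ h0; simp at e
    rw [wb_append_right]; simp [e, h0]
  · have e := wb_ext_zero true u _ h0; simp at e
    rw [wb_append_right]; simp [e]
  · rw [wb_append_right]; simpa [h1] using hodd
  · have e := wb_ext_zero false u _ h1; simp at e
    rw [wb_append_right]; simp [e]
  · have e := wb_ext_zero true u _ h1; simp at e
    rw [wb_append_right]; simp [e, h1]
end

section
/- Suppose (u,v) is a pair of words over {0,1} with (u choose v0) = 0 and (u choose v1) = 0 (i.e., v0 and v1 do not occur as subsequences of u). Then for any words w, z of the same length, (uw choose vz) = (u choose v)·(w choose z). -/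
/-! When no extension `v ++ [a]` of `v` occurs in `u`, every occurrence of `v ++ z` in `u ++ w`
with `|w| = |z|` matches `v` inside `u` and `z` inside `w`: matching a letter of `z` inside `u`
would produce an occurrence of some `v ++ [a]` in `u`, and leaving a letter of `v` for `w` leaves
too few letters of `w` for the rest. -/

section

variable {A : Type*} [DecidableEq A]

theorem wb_eq_zero_of_length_lt : ∀ {u v : List A}, u.length < v.length → wb u v = 0
  | _, [], h => absurd h (Nat.not_lt_zero _)
  | [], _ :: _, _ => rfl
  | a :: u, b :: v, h => by
    simp only [List.length_cons] at h
    rw [wb, wb_eq_zero_of_length_lt (v := b :: v) (by simp only [List.length_cons]; omega),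
      wb_eq_zero_of_length_lt (v := v) (by omega)]
    simp

theorem wb_cons_self_ne_zero (a : A) (u : List A) : wb (a :: u) [a] ≠ 0 := by
  simp [wb]

theorem wb_append_append_of_length_eq {u v : List A} (hv : ∀ a, wb u (v ++ [a]) = 0)
    {w z : List A} (hlen : w.length = z.length) :
    wb (u ++ w) (v ++ z) = wb u v * wb w z := by
  induction u generalizing v with
  | nil =>
    cases v with
    | nil => simp [wb]
    | cons b v =>
      rw [wb_eq_zero_of_length_lt (by simp [hlen]), wb_eq_zero_of_length_lt (by simp)]
      simp
  | cons a u ih =>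
    cases v with
    | nil => exact absurd (hv a) (wb_cons_self_ne_zero a u)
    | cons b v =>
      have hv' : ∀ c, wb u (b :: v ++ [c]) = 0 ∧ (a = b → wb u (v ++ [c]) = 0) := fun c => by
        have := hv c
        simp only [List.cons_append, wb, Nat.add_eq_zero_iff, ite_eq_right_iff] at this
        exact this
      have ih_cons := ih fun c => (hv' c).1
      simp only [List.cons_append] at ih_cons ⊢
      rw [wb, wb, ih_cons]
      by_cases hab : a = b
      · rw [if_pos hab, if_pos hab, ih fun c => (hv' c).2 hab, Nat.add_mul]
      · rw [if_neg hab, if_neg hab, add_zero, add_zero]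

end

theorem stmt_8 (u v : List Bool) (h0 : wb u (v ++ [false]) = 0)
    (h1 : wb u (v ++ [true]) = 0) (w z : List Bool) (hlen : w.length = z.length) :
    wb (u ++ w) (v ++ z) = wb u v * wb w z :=
  wb_append_append_of_length_eq (Bool.forall_bool.mpr ⟨h0, h1⟩) hlen
end

section
/- Let L = {ε} ∪ 1{0,1}* be the set of binary words with no leading zeros, and let L_n be the words of L of length at most n. Then the number of pairs (u,v) ∈ L_n × L_n with (u choose v) > 0 equals 3^n. -/
/-- Binary representation of a natural number, most significant bit first,
with no leading zeros (`rep2 0 = []`). -/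
def rep2 (n : ℕ) : List Bool := (Nat.bits n).reverse

/-!
Through `rep2`, the words of `L` are the natural numbers and `L_n` is `range (2 ^ n)`, so the count
is `∑_{a < 2^n} d a`, where `d a` is the number of `b` with `rep2 b` a subword of `rep2 a`.
A subword of `w c` is a subword of `w` or has the form `x c` with `x` a subword of `w`; the
words obtained both ways are the subwords of `w` ending in `c`. Reading `ε` as ending in `0`
(as `2 * 0 = 0`), these overlaps for `c = 0` and `c = 1` partition the subwords of `w`, whence
`d (2a) + d (2a+1) = 4 d a - d a = 3 d a` and the sum triples with each increase of `n`.
-/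

open Finset
open scoped List

theorem wb_pos_iff_sublist {A : Type*} [DecidableEq A] (u v : List A) :
    0 < wb u v ↔ v <+ u := by
  induction u generalizing v with
  | nil => cases v <;> simp [wb]
  | cons a u ih =>
    cases v with
    | nil => simp [wb]
    | cons b v =>
      rw [wb, List.sublist_cons_iff]
      split_ifs with hab
      · subst hab; simp [ih]
      · simp [ih, Ne.symm hab]

namespace Nat

theorem bits_eq_bodd_cons_div2_bits {n : ℕ} (hn : n ≠ 0) : n.bits = n.bodd :: n.div2.bits := by
  conv_lhs => rw [← bit_bodd_div2 n]
  refine bits_append_bit _ _ fun h => ?_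
  by_contra hb
  rw [Bool.not_eq_true] at hb
  exact hn (by rw [← bit_bodd_div2 n, h, hb, bit_false_zero])

theorem bits_eq_nil_iff {n : ℕ} : n.bits = [] ↔ n = 0 := by
  rw [← List.length_eq_zero_iff, size_eq_bits_len, size_eq_zero]

theorem bit_injective (c : Bool) : Function.Injective (bit c) :=
  Function.LeftInverse.injective (div2_bit c)

end Nat

theorem rep2_sublist_rep2_iff {a b : ℕ} : rep2 b <+ rep2 a ↔ b.bits <+ a.bits :=
  List.reverse_sublist

theorem lt_two_pow_of_bits_sublist {a b n : ℕ} (h : b.bits <+ a.bits) (ha : a < 2 ^ n) :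
    b < 2 ^ n := by
  rw [← Nat.size_le] at ha ⊢
  exact (by simpa only [Nat.size_eq_bits_len] using h.length_le : b.size ≤ a.size).trans ha

/-- Since `rep2` is a bijection from `ℕ` onto `L`, this is the set of words of `L` that are
subwords of `rep2 a`; the bound `2 ^ a.size` excludes none of them (`mem_binarySubwords`). -/
def binarySubwords (a : ℕ) : Finset ℕ :=
  (range (2 ^ a.size)).filter fun b => rep2 b <+ rep2 a

theorem mem_binarySubwords {a b : ℕ} : b ∈ binarySubwords a ↔ b.bits <+ a.bits := by
  rw [binarySubwords, mem_filter, mem_range, rep2_sublist_rep2_iff]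
  exact and_iff_right_of_imp fun h => lt_two_pow_of_bits_sublist h a.lt_size_self

theorem binarySubwords_eq_filter_range {a n : ℕ} (ha : a < 2 ^ n) :
    binarySubwords a = (range (2 ^ n)).filter fun b => rep2 b <+ rep2 a := by
  ext b
  rw [mem_binarySubwords, mem_filter, mem_range, rep2_sublist_rep2_iff]
  exact (and_iff_right_of_imp fun h => lt_two_pow_of_bits_sublist h ha).symm

theorem binarySubwords_bit (c : Bool) (a : ℕ) :
    binarySubwords (Nat.bit c a) = binarySubwords a ∪ (binarySubwords a).image (Nat.bit c) := by
  by_cases hdeg : a = 0 ∧ c = false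
  · obtain ⟨rfl, rfl⟩ := hdeg
    rw [Nat.bit_false_zero, eq_comm, union_eq_left]
    rintro _ hb
    obtain ⟨x, hx, rfl⟩ := mem_image.1 hb
    simp_all [mem_binarySubwords, Nat.bits_eq_nil_iff]
  have hbits : (Nat.bit c a).bits = c :: a.bits := Nat.bits_append_bit _ _ (by grind)
  ext b
  simp only [mem_union, mem_image, mem_binarySubwords, hbits, List.sublist_cons_iff]
  constructor
  · rintro (h | ⟨r, hb, hr⟩)
    · exact Or.inl h
    have hb0 : b ≠ 0 := by rintro rfl; simp at hb
    rw [Nat.bits_eq_bodd_cons_div2_bits hb0, List.cons.injEq] at hb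
    refine Or.inr ⟨b.div2, hb.2 ▸ hr, ?_⟩
    rw [← hb.1, Nat.bit_bodd_div2]
  · rintro (h | ⟨x, hx, rfl⟩)
    · exact Or.inl h
    by_cases hx0 : x = 0 ∧ c = false
    · obtain ⟨rfl, rfl⟩ := hx0
      simp
    exact Or.inr ⟨x.bits, Nat.bits_append_bit _ _ (by grind), hx⟩

theorem binarySubwords_inter_image_bit (c : Bool) (a : ℕ) :
    binarySubwords a ∩ (binarySubwords a).image (Nat.bit c) =
      (binarySubwords a).filter fun b => b.bodd = c := by
  ext b
  simp only [mem_inter, mem_image, mem_filter]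
  refine and_congr_right fun hb => ⟨?_, fun hc => ⟨b.div2, ?_, ?_⟩⟩
  · rintro ⟨x, -, rfl⟩
    exact Nat.bodd_bit c x
  · rw [mem_binarySubwords, Nat.div2_bits_eq_tail] at *
    exact (List.tail_sublist _).trans hb
  · rw [← hc, Nat.bit_bodd_div2]

theorem card_binarySubwords_bit (c : Bool) (a : ℕ) :
    #(binarySubwords (Nat.bit c a)) + #((binarySubwords a).filter fun b => b.bodd = c) =
      2 * #(binarySubwords a) := by
  rw [binarySubwords_bit, ← binarySubwords_inter_image_bit, card_union_add_card_inter,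
    card_image_of_injective _ (Nat.bit_injective c), two_mul]

theorem card_binarySubwords_even_add_odd (a : ℕ) :
    #(binarySubwords (2 * a)) + #(binarySubwords (2 * a + 1)) = 3 * #(binarySubwords a) := by
  have h0 := card_binarySubwords_bit false a
  have h1 := card_binarySubwords_bit true a
  have hsplit := card_filter_add_card_filter_not (s := binarySubwords a) fun b => b.bodd = true
  simp only [Nat.bit_false_apply, Nat.bit_true_apply, Bool.not_eq_true] at h0 h1 hsplit
  omega

theorem Finset.sum_range_two_mul {M : Type*} [AddCommMonoid M] (f : ℕ → M) (m : ℕ) :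
    ∑ a ∈ range (2 * m), f a = ∑ a ∈ range m, (f (2 * a) + f (2 * a + 1)) := by
  induction m with
  | zero => simp
  | succ m ih => rw [Nat.mul_succ, sum_range_succ, sum_range_succ, sum_range_succ, ih, add_assoc]

theorem sum_card_binarySubwords (n : ℕ) :
    ∑ a ∈ range (2 ^ n), #(binarySubwords a) = 3 ^ n := by
  induction n with
  | zero => decide
  | succ n ih =>
    rw [pow_succ', Finset.sum_range_two_mul]
    simp only [card_binarySubwords_even_add_odd, ← mul_sum, ih, pow_succ']

theorem stmt_9 (n : ℕ) :
    ((Finset.range (2 ^ n) ×ˢ Finset.range (2 ^ n)).filter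
      (fun p => 0 < wb (rep2 p.1) (rep2 p.2))).card = 3 ^ n := by
  rw [card_filter, sum_product, ← sum_card_binarySubwords n]
  refine sum_congr rfl fun a ha => ?_
  rw [← card_filter, binarySubwords_eq_filter_range (mem_range.1 ha)]
  simp only [wb_pos_iff_sublist]
end

section
/- Let V_n be the set of pairs of integers (x,y) with 2^{n−1} ≤ y < 2^n, 0 ≤ x ≤ y, and (rep₂(y) choose rep₂(x)) > 0, where rep₂ is the binary representation. Then for all n ≥ 1, V_{n+1} = f₁(V_n) ∪ f₂(V_n) ∪ f₃(V_n) ∪ f₄(V_n), where f₁(x,y)=(2x,2y), f₂(x,y)=(2x+1,2y+1), f₃(x,y)=(x,2y), f₄(x,y)=(x,2y+1). -/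
lemma wb_pos {A : Type*} [DecidableEq A] : ∀ u v : List A, 0 < wb u v ↔ v.Sublist u
  | u, [] => by simp [wb]
  | [], b :: v => by simp [wb]
  | a :: u, b :: v => by
    rw [wb, List.sublist_cons_iff]
    constructor
    · intro h
      by_cases h1 : 0 < wb u (b :: v)
      · exact Or.inl ((wb_pos u (b :: v)).1 h1)
      · have h0 : wb u (b :: v) = 0 := by omega
        by_cases hab : a = b
        · subst hab
          rw [h0, if_pos rfl] at h
          exact Or.inr ⟨v, rfl, (wb_pos u v).1 (by omega)⟩
        · rw [h0, if_neg hab] at h; omega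
    · rintro (h | ⟨r, hr, h⟩)
      · have := (wb_pos u (b :: v)).2 h; omega
      · cases hr
        have h2 := (wb_pos u v).2 h
        rw [if_pos rfl]
        omega

lemma wb_rep2_pos {x y : ℕ} : 0 < wb (rep2 y) (rep2 x) ↔ x.bits.Sublist y.bits := by
  rw [wb_pos, rep2, rep2, List.reverse_sublist]

lemma bits_inj : ∀ x y : ℕ, x.bits = y.bits → x = y := by
  intro x
  induction x using Nat.strong_induction_on with
  | _ x ih =>
    intro y h
    rcases Nat.eq_zero_or_pos x with rfl | hx
    · rcases Nat.eq_zero_or_pos y with rfl | hy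
      · rfl
      · exfalso
        have h1 := Nat.size_eq_bits_len y
        have h2 := Nat.size_pos.2 hy
        simp only [Nat.zero_bits] at h
        rw [← h] at h1
        simp at h1
        omega
    · rcases Nat.eq_zero_or_pos y with rfl | hy
      · exfalso
        have h1 := Nat.size_eq_bits_len x
        have h2 := Nat.size_pos.2 hx
        simp only [Nat.zero_bits] at h
        rw [h] at h1
        simp at h1
        omega
      · have h1 : x.bodd = y.bodd := by
          rw [Nat.bodd_eq_bits_head, Nat.bodd_eq_bits_head, h]
        have hd2 : x.div2 < x := by rw [Nat.div2_val]; omega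
        have h2 : x.div2 = y.div2 := by
          apply ih x.div2 hd2
          rw [Nat.div2_bits_eq_tail, Nat.div2_bits_eq_tail, h]
        calc x = cond x.bodd 1 0 + 2 * x.div2 := (Nat.bodd_add_div2 x).symm
        _ = cond y.bodd 1 0 + 2 * y.div2 := by rw [h1, h2]
        _ = y := Nat.bodd_add_div2 y

lemma le_of_bits_sublist {x y : ℕ} (h : x.bits.Sublist y.bits) : x ≤ y := by
  have hlen := h.length_le
  rcases eq_or_lt_of_le hlen with he | hl
  · exact (bits_inj x y (h.eq_of_length he)).le
  · have hx : x < 2 ^ x.size := Nat.lt_size_self x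
    have hsx : x.bits.length = x.size := Nat.size_eq_bits_len x
    have hsy : y.bits.length = y.size := Nat.size_eq_bits_len y
    have hy : 2 ^ (y.size - 1) ≤ y := Nat.lt_size.1 (by omega)
    have hpow : 2 ^ x.size ≤ 2 ^ (y.size - 1) :=
      Nat.pow_le_pow_right (by norm_num) (by omega)
    omega

theorem stmt_10 (n : ℕ) (hn : 1 ≤ n)
    (V : ℕ → Set (ℕ × ℕ))
    (hV : ∀ m, V m = {p : ℕ × ℕ |
      2 ^ (m - 1) ≤ p.2 ∧ p.2 < 2 ^ m ∧ p.1 ≤ p.2 ∧ 0 < wb (rep2 p.2) (rep2 p.1)}) :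
    V (n + 1) =
      (fun p : ℕ × ℕ => (2 * p.1, 2 * p.2)) '' V n ∪
      (fun p : ℕ × ℕ => (2 * p.1 + 1, 2 * p.2 + 1)) '' V n ∪
      (fun p : ℕ × ℕ => (p.1, 2 * p.2)) '' V n ∪
      (fun p : ℕ × ℕ => (p.1, 2 * p.2 + 1)) '' V n := by
  have hVm : ∀ m x y, (x, y) ∈ V m ↔
      2 ^ (m - 1) ≤ y ∧ y < 2 ^ m ∧ x ≤ y ∧ x.bits.Sublist y.bits := by
    intro m x y
    rw [hV m]
    simp only [Set.mem_setOf_eq, wb_rep2_pos]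
  have h2n : 2 * 2 ^ (n - 1) = 2 ^ n := by
    rw [← pow_succ']
    congr 1
    omega
  ext ⟨x, y⟩
  simp only [Set.mem_union, Set.mem_image, Prod.exists, Prod.mk.injEq]
  rw [hVm]
  constructor
  · rintro ⟨h1, h2, h3, h4⟩
    simp only [Nat.add_sub_cancel] at h1
    have hy2 : 2 ≤ y := le_trans (by have := Nat.one_lt_two_pow_iff.2 (by omega : n ≠ 0); omega) h1
    rcases Nat.even_or_odd y with ⟨k, hk⟩ | ⟨k, hk⟩
    · -- y = 2k
      have hk0 : k ≠ 0 := by omega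
      have hky : y = 2 * k := by omega
      subst hky
      rw [Nat.bit0_bits k hk0] at h4
      have hkV : 2 ^ (n - 1) ≤ k ∧ k < 2 ^ n := by constructor <;> omega
      rcases List.sublist_cons_iff.1 h4 with h | ⟨r, hr, h⟩
      · refine Or.inl (Or.inr ⟨x, k, ?_, rfl, rfl⟩)
        exact (hVm n x k).2 ⟨hkV.1, hkV.2, le_of_bits_sublist h, h⟩
      · rcases Nat.eq_zero_or_pos x with hx0 | hxpos
        · subst hx0; rw [Nat.zero_bits] at hr; simp at hr
        rcases Nat.even_or_odd x with ⟨m, hm⟩ | ⟨m, hm⟩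
        · have hm0 : m ≠ 0 := by omega
          have hx : x = 2 * m := by omega
          subst hx
          rw [Nat.bit0_bits m hm0] at hr
          injection hr with _ h5
          subst h5
          refine Or.inl (Or.inl (Or.inl ⟨m, k, ?_, rfl, rfl⟩))
          exact (hVm n m k).2 ⟨hkV.1, hkV.2, le_of_bits_sublist h, h⟩
        · have hx : x = 2 * m + 1 := by omega
          subst hx
          rw [Nat.bit1_bits m] at hr
          exact absurd hr (by simp)
    · -- y = 2k+1
      have hky : y = 2 * k + 1 := by omega
      subst hky
      rw [Nat.bit1_bits k] at h4
      have hkV : 2 ^ (n - 1) ≤ k ∧ k < 2 ^ n := by constructor <;> omega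
      rcases List.sublist_cons_iff.1 h4 with h | ⟨r, hr, h⟩
      · refine Or.inr ⟨x, k, ?_, rfl, rfl⟩
        exact (hVm n x k).2 ⟨hkV.1, hkV.2, le_of_bits_sublist h, h⟩
      · rcases Nat.eq_zero_or_pos x with hx0 | hxpos
        · subst hx0; rw [Nat.zero_bits] at hr; simp at hr
        rcases Nat.even_or_odd x with ⟨m, hm⟩ | ⟨m, hm⟩
        · have hm0 : m ≠ 0 := by omega
          have hx : x = 2 * m := by omega
          subst hx
          rw [Nat.bit0_bits m hm0] at hr
          exact absurd hr (by simp)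
        · have hx : x = 2 * m + 1 := by omega
          subst hx
          rw [Nat.bit1_bits m] at hr
          injection hr with _ h5
          subst h5
          refine Or.inl (Or.inl (Or.inr ⟨m, k, ?_, rfl, rfl⟩))
          exact (hVm n m k).2 ⟨hkV.1, hkV.2, le_of_bits_sublist h, h⟩
  · rintro (((⟨a, b, hab, hx, hy⟩ | ⟨a, b, hab, hx, hy⟩) | ⟨a, b, hab, hx, hy⟩) | ⟨a, b, hab, hx, hy⟩) <;>
      subst hx <;> subst hy <;>
      obtain ⟨h1, h2, h3, h4⟩ := (hVm n a b).1 hab <;>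
      have hb0 : b ≠ 0 := by
        have : (1:ℕ) ≤ 2 ^ (n - 1) := Nat.one_le_two_pow
        omega
    · refine ⟨by simp only [Nat.add_sub_cancel]; omega, by omega, by omega, ?_⟩
      rcases Nat.eq_zero_or_pos a with ha0 | hapos
      · subst ha0; simp
      · rw [Nat.bit0_bits a (by omega), Nat.bit0_bits b hb0]
        exact h4.cons₂ _
    · refine ⟨by simp only [Nat.add_sub_cancel]; omega, by omega, by omega, ?_⟩
      rw [Nat.bit1_bits a, Nat.bit1_bits b]
      exact h4.cons₂ _
    · refine ⟨by simp only [Nat.add_sub_cancel]; omega, by omega, by omega, ?_⟩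
      rw [Nat.bit0_bits b hb0]
      exact h4.trans (List.sublist_cons_self _ _)
    · refine ⟨by simp only [Nat.add_sub_cancel]; omega, by omega, by omega, ?_⟩
      rw [Nat.bit1_bits b]
      exact h4.trans (List.sublist_cons_self _ _)
end

section
/- For every n ≥ 0 and r ∈ {0,1,…,7}, the pair (1 0^{8n+4+r} 1, 1 0^{8n+r} 1) satisfies condition (⋆) if and only if 0 ≤ r ≤ 3, where condition (⋆) for (u,v) means: (u,v) ≠ (ε,ε), (u choose v) is odd, (u choose v0) = 0 and (u choose v1) = 0. -/
lemma wb_nil {A : Type*} [DecidableEq A] (l : List A) (h : l ≠ []) : wb [] l = 0 := by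
  cases l with
  | nil => simp at h
  | cons a t => rfl

lemma lem1 (a b : ℕ) :
    wb (List.replicate a false ++ [true]) (List.replicate b false ++ [true]) = Nat.choose a b := by
  induction a generalizing b with
  | zero =>
    cases b with
    | zero => simp [wb]
    | succ b => simp [wb, List.replicate_succ, wb_nil]
  | succ a ih =>
    cases b with
    | zero =>
      have h0 := ih 0
      simp only [List.replicate_zero, List.nil_append] at h0
      simp only [List.replicate_succ, List.cons_append, List.replicate_zero, List.nil_append, wb,
        if_neg (by simp : ¬ (false = true))]
      simp [h0]
    | succ b =>
      have h1 := ih (b+1)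
      have h2 := ih b
      simp only [List.replicate_succ, List.cons_append] at h1 ⊢
      simp only [wb, if_pos rfl, List.append_eq, h1, h2]
      simp [Nat.choose_succ_succ, Nat.add_comm]

lemma lem2 (a b : ℕ) (c : Bool) :
    wb (List.replicate a false ++ [true]) (List.replicate b false ++ [true, c]) = 0 := by
  induction a generalizing b with
  | zero =>
    cases b with
    | zero => simp [wb, wb_nil]
    | succ b => simp [wb, List.replicate_succ, wb_nil]
  | succ a ih =>
    cases b with
    | zero =>
      have h0 := ih 0
      simp only [List.replicate_zero, List.nil_append] at h0
      simp only [List.replicate_succ, List.cons_append, List.replicate_zero, List.nil_append, wb,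
        if_neg (by simp : ¬ (false = true))]
      simp [h0]
    | succ b =>
      have h1 := ih (b+1)
      have h2 := ih b
      simp only [List.replicate_succ, List.cons_append] at h1 ⊢
      simp only [wb, if_pos rfl, List.append_eq, h1, h2]
      simp

lemma lem3 (a : ℕ) (l : List Bool) (h : l ≠ []) :
    wb (List.replicate a false ++ [true]) (true :: l) = 0 := by
  induction a with
  | zero => simp [wb, wb_nil l h]
  | succ a ih =>
    simp only [List.replicate_succ, List.cons_append, wb]
    simp [ih]

lemma parity4 (m : ℕ) : Nat.choose m 4 % 2 = (m / 4) % 2 := by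
  haveI : Fact (Nat.Prime 2) := ⟨Nat.prime_two⟩
  have h1 := @Choose.choose_modEq_choose_mod_mul_choose_div_nat m 4 2 _
  have h2 := @Choose.choose_modEq_choose_mod_mul_choose_div_nat (m/2) 2 2 _
  have h3 := @Choose.choose_modEq_choose_mod_mul_choose_div_nat (m/4) 1 2 _
  simp [Nat.ModEq] at h1 h2 h3
  rw [Nat.div_div_eq_div_mul] at h2
  norm_num at h2
  omega

lemma key (n r : ℕ) (hr : r ≤ 7) :
    Odd (Nat.choose (8 * n + 4 + r) (8 * n + r)) ↔ r ≤ 3 := by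
  rw [show 8 * n + r = (8 * n + 4 + r) - 4 by omega,
    Nat.choose_symm (by omega), Nat.odd_iff, parity4]
  omega

theorem stmt_14 (n r : ℕ) (hr : r ≤ 7) :
    StarCond (true :: (List.replicate (8 * n + 4 + r) false ++ [true]))
         (true :: (List.replicate (8 * n + r) false ++ [true])) ↔ r ≤ 3 := by
  have hY : (List.replicate (8 * n + r) false ++ [true] : List Bool) ≠ [] := by simp
  have hmain : wb (true :: (List.replicate (8 * n + 4 + r) false ++ [true]))
      (true :: (List.replicate (8 * n + r) false ++ [true]))
      = Nat.choose (8 * n + 4 + r) (8 * n + r) := by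
    simp only [wb, if_pos rfl, if_true, lem3 _ _ hY, lem1, Nat.zero_add]
  have hext : ∀ c : Bool, wb (true :: (List.replicate (8 * n + 4 + r) false ++ [true]))
      ((true :: (List.replicate (8 * n + r) false ++ [true])) ++ [c]) = 0 := by
    intro c
    have he : (List.replicate (8 * n + r) false ++ [true] : List Bool) ++ [c]
        = List.replicate (8 * n + r) false ++ [true, c] := by simp
    simp only [List.cons_append, wb, if_pos rfl, if_true, List.append_eq, he,
      lem3 _ _ (by simp : (List.replicate (8 * n + r) false ++ [true, c] : List Bool) ≠ []),
      lem2, Nat.add_zero]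
  constructor
  · rintro ⟨-, hodd, -, -⟩
    rw [hmain] at hodd
    exact (key n r hr).mp hodd
  · intro h
    refine ⟨by simp, ?_, hext false, hext true⟩
    unfold StarCond at *
    rw [hmain]
    exact (key n r hr).mpr h
end

section
/- Let u, v be binary words such that (u choose v) is odd, and let k satisfy 2^k > |u|. Then the pair (u 0^{2^k} 1, v 0^{2^k} 1) satisfies condition (⋆): its binomial coefficient is odd, and both (u 0^{2^k} 1 choose v 0^{2^k} 1 0) and (u 0^{2^k} 1 choose v 0^{2^k} 1 1) are zero. -/
/-!
Appending the letter `1` to both words, an occurrence of `v 0^m 1` in `u 0^m 1` must use the final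
`1` of `u 0^m 1`, because `u` is too short to contain `v 0^m 1`; for the same reason no word
extending `v 0^m 1` occurs in `u 0^m 1` at all. So `(u 0^m 1 choose v 0^m 1) = (u 0^m choose v 0^m)`,
and matching trailing zeros gives `(u 0^m choose v 0^m) = ∑ᵢ (m choose i) (u choose v 0^i)`.
For `m = 2^k` every middle binomial coefficient is even, the term `i = m` vanishes because
`|u| < m`, and the term `i = 0` is `(u choose v)`.
-/

namespace wb

variable {A : Type*} [DecidableEq A]

@[simp]
theorem nil_right (u : List A) : wb u [] = 1 := by
  cases u <;> rfl

theorem eq_zero_of_length_lt {u v : List A} (h : u.length < v.length) : wb u v = 0 := by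
  induction u generalizing v with
  | nil =>
    obtain _ | ⟨b, v⟩ := v
    · simp at h
    · rfl
  | cons a u ih =>
    obtain _ | ⟨b, v⟩ := v
    · simp at h
    · simp only [List.length_cons, Nat.add_lt_add_iff_right] at h
      simp [wb, ih h, ih (v := b :: v) (by simp; omega)]

theorem append_eq_zero {u v : List A} (h : wb u v = 0) (w : List A) : wb u (v ++ w) = 0 := by
  induction u generalizing v with
  | nil =>
    obtain _ | ⟨b, v⟩ := v
    · simp at h
    · rfl
  | cons a u ih =>
    obtain _ | ⟨b, v⟩ := v
    · simp at h
    · simp only [wb, Nat.add_eq_zero_iff, ite_eq_right_iff] at h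
      show wb u (b :: v ++ w) + (if a = b then wb u (v ++ w) else 0) = 0
      rw [ih h.1, zero_add, ite_eq_right_iff]
      exact fun hab => ih (h.2 hab)

theorem append_singleton (u v : List A) (a b : A) :
    wb (u ++ [a]) (v ++ [b]) = wb u (v ++ [b]) + if a = b then wb u v else 0 := by
  induction u generalizing v with
  | nil =>
    obtain _ | ⟨c, v⟩ := v
    · simp [wb]
    · simp [wb, eq_zero_of_length_lt (u := []) (v := v ++ [b]) (by simp)]
  | cons c u ih =>
    obtain _ | ⟨d, v⟩ := v
    · have ih_nil := ih []
      simp only [List.nil_append] at ih_nil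
      simp only [List.cons_append, List.nil_append, wb, ih_nil, nil_right]
      split_ifs <;> omega
    · have ih_cons := ih (d :: v)
      simp only [List.cons_append] at ih_cons
      simp only [List.cons_append, wb, ih_cons, ih v]
      split_ifs <;> omega

theorem append_replicate_of_ne {a b : A} (hab : a ≠ b) (u v : List A) (n : ℕ) :
    wb (u ++ List.replicate n a) (v ++ [b]) = wb u (v ++ [b]) := by
  induction n with
  | zero => simp
  | succ n ih => rw [List.replicate_succ', ← List.append_assoc, append_singleton, ih, if_neg hab,
      add_zero]

theorem append_replicate_append_replicate (u v : List A) (a : A) (n j : ℕ) :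
    wb (u ++ List.replicate n a) (v ++ List.replicate (j + n) a) =
      ∑ i ∈ Finset.range (n + 1), n.choose i * wb u (v ++ List.replicate (j + i) a) := by
  induction n generalizing j with
  | zero => simp
  | succ n ih =>
    have hsplit : wb (u ++ List.replicate (n + 1) a) (v ++ List.replicate (j + (n + 1)) a) =
        wb (u ++ List.replicate n a) (v ++ List.replicate ((j + 1) + n) a) +
          wb (u ++ List.replicate n a) (v ++ List.replicate (j + n) a) := by
      rw [← add_assoc, List.replicate_succ' (n := n), List.replicate_succ' (n := j + n),
        ← List.append_assoc, ← List.append_assoc, append_singleton, if_pos rfl, List.append_assoc,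
        ← List.replicate_succ', add_right_comm]
    have hpascal := Finset.sum_choose_succ_mul (R := ℕ)
      (fun i _ => wb u (v ++ List.replicate (j + i) a)) n
    simp only [Nat.cast_id] at hpascal
    rw [hsplit, ih, ih, add_comm, hpascal]
    simp only [add_right_comm j 1, add_assoc j]

theorem odd_append_replicate_two_pow_iff {u : List A} (v : List A) (a : A) {k : ℕ}
    (hk : u.length < 2 ^ k) :
    Odd (wb (u ++ List.replicate (2 ^ k) a) (v ++ List.replicate (2 ^ k) a)) ↔ Odd (wb u v) := by
  have hsum := append_replicate_append_replicate u v a (2 ^ k) 0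
  rw [zero_add, Finset.sum_range_succ'] at hsum
  simp only [zero_add] at hsum
  have heven : 2 ∣ ∑ i ∈ Finset.range (2 ^ k),
      (2 ^ k).choose (i + 1) * wb u (v ++ List.replicate (i + 1) a) := by
    refine Finset.dvd_sum fun i hi => ?_
    rcases (Nat.lt_iff_add_one_le.mp (Finset.mem_range.mp hi)).lt_or_eq with hlt | heq
    · exact dvd_mul_of_dvd_left (Nat.prime_two.dvd_choose_pow (by omega) hlt.ne) _
    · rw [heq, eq_zero_of_length_lt (by simp; omega), mul_zero]
      exact dvd_zero 2
  simp only [hsum, Nat.choose_zero_right, List.replicate_zero, List.append_nil,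
    one_mul, Nat.odd_iff]
  omega

end wb

theorem stmt_17 (u v : List Bool) (h : Odd (wb u v)) (k : ℕ) (hk : u.length < 2 ^ k) :
    StarCond (u ++ List.replicate (2 ^ k) false ++ [true])
         (v ++ List.replicate (2 ^ k) false ++ [true]) := by
  have hshort : wb (u ++ List.replicate (2 ^ k) false) (v ++ List.replicate (2 ^ k) false ++ [true])
      = 0 := by
    rw [wb.append_replicate_of_ne Bool.false_ne_true]
    exact wb.eq_zero_of_length_lt (by simp; omega)
  have hextend (c : Bool) : wb (u ++ List.replicate (2 ^ k) false ++ [true])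
      (v ++ List.replicate (2 ^ k) false ++ [true] ++ [c]) = 0 := by
    rw [wb.append_singleton, wb.append_eq_zero hshort, hshort, ite_self]
  refine ⟨by simp, ?_, hextend false, hextend true⟩
  rw [wb.append_singleton, hshort, if_pos rfl, zero_add]
  exact (wb.odd_append_replicate_two_pow_iff v false hk).mpr h
end

section
/- Say (u,v) satisfies (⋆) if (u,v) ≠ (ε,ε), (u choose v) is odd, and (u choose v0) = (u choose v1) = 0. If (u,v) satisfies (⋆), then for every n and every word w of length n, and for each j ≤ n, there exists at least one word z of length j such that (uwz choose vw) is odd. -/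
lemma wb_nil_s19 (s : List Bool) : wb s ([] : List Bool) = 1 := by cases s <;> rfl

lemma wb_snoc (s : List Bool) : ∀ (t : List Bool) (a b : Bool),
    wb (s ++ [a]) (t ++ [b]) = wb s (t ++ [b]) + if a = b then wb s t else 0 := by
  induction s with
  | nil =>
    intro t a b
    cases t with
    | nil => simp [wb, wb_nil_s19]
    | cons c t =>
      simp only [List.nil_append, List.cons_append, wb]
      have : wb ([] : List Bool) (t ++ [b]) = 0 := by cases t <;> rfl
      simp [this]
  | cons x s ih =>
    intro t a b
    cases t with
    | nil =>
      have e := ih [] a b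
      simp only [List.nil_append] at e
      simp only [List.nil_append, List.cons_append, List.append_eq, wb, wb_nil_s19] at e ⊢
      rw [e]
      split_ifs <;> omega
    | cons c t =>
      have e1 := ih (c :: t) a b
      have e2 := ih t a b
      simp only [List.cons_append, List.append_eq] at e1 e2 ⊢
      simp only [wb]
      rw [e1, e2]
      split_ifs <;> omega

lemma wb_zero_append (s : List Bool) : ∀ t r : List Bool, wb s t = 0 → wb s (t ++ r) = 0 := by
  induction s with
  | nil =>
    intro t r h
    cases t with
    | nil => simp [wb] at h
    | cons c t => cases r <;> simp [wb]
  | cons x s ih =>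
    intro t r h
    cases t with
    | nil => simp [wb_nil_s19] at h
    | cons c t =>
      simp only [wb, Nat.add_eq_zero] at h
      simp only [List.cons_append, wb, List.append_eq]
      have e : wb s (c :: (t ++ r)) = 0 := ih (c :: t) r h.1
      rw [e]
      rcases Nat.eq_zero_or_pos (wb s t) with h0 | h0
      · simp [ih t r h0]
      · have : x ≠ c := by
          intro hxc; simp [hxc] at h; omega
        simp [this]

def P (u v : List Bool) : Prop :=
  Odd (wb u v) ∧ wb u (v ++ [false]) = 0 ∧ wb u (v ++ [true]) = 0

lemma P_snoc (u v : List Bool) (c : Bool) (h : P u v) : P (u ++ [c]) (v ++ [c]) := by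
  obtain ⟨h1, h2, h3⟩ := h
  have hvc : wb u (v ++ [c]) = 0 := by cases c <;> assumption
  refine ⟨?_, ?_, ?_⟩
  · rw [wb_snoc u v c c]; simpa [hvc] using h1
  · rw [wb_snoc u (v ++ [c]) c false]
    rw [wb_zero_append u (v ++ [c]) [false] hvc, hvc]
    simp
  · rw [wb_snoc u (v ++ [c]) c true]
    rw [wb_zero_append u (v ++ [c]) [true] hvc, hvc]
    simp

lemma P_append (u v w : List Bool) (h : P u v) : P (u ++ w) (v ++ w) := by
  induction w using List.reverseRecOn with
  | nil => simpa using h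
  | append_singleton w c ih =>
    have := P_snoc (u ++ w) (v ++ w) c ih
    simpa [List.append_assoc] using this

lemma wb_replicate (s t : List Bool) (a b : Bool) (hab : a ≠ b) (j : ℕ) :
    wb (s ++ List.replicate j a) (t ++ [b]) = wb s (t ++ [b]) := by
  induction j with
  | zero => simp
  | succ n ih =>
    rw [List.replicate_succ', ← List.append_assoc, wb_snoc, ih]
    simp [hab]

theorem stmt_19 (u v : List Bool) (h : StarCond u v) (w : List Bool) (j : ℕ)
    (hj : j ≤ w.length) :
    ∃ z : List Bool, z.length = j ∧ Odd (wb (u ++ w ++ z) (v ++ w)) := by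
  obtain ⟨_, h1, h2, h3⟩ := h
  have hP : P (u ++ w) (v ++ w) := P_append u v w ⟨h1, h2, h3⟩
  rcases List.eq_nil_or_concat (v ++ w) with hvw | ⟨t, b, hvw⟩
  · exact ⟨List.replicate j true, by simp, by rw [hvw, wb_nil_s19]; exact odd_one⟩
  · rw [List.concat_eq_append] at hvw
    refine ⟨List.replicate j (!b), by simp, ?_⟩
    rw [hvw, wb_replicate (u ++ w) t (!b) b (by simp)]
    rw [← hvw]; exact hP.1
end
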